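/- The tent map T is chaotic on [0,1]: T maps [0,1] onto [0,1], is continuous on [0,1], is topologically transitive on [0,1] (with the subspace topology), has a dense set of periodic points in [0,1], and is sensitive to initial conditions on [0,1] (with the standard metric). -/

import Mathlib

/-- The tent map `T : ℝ → ℝ`. -/
noncomputable def tent (x : ℝ) : ℝ := if x ≤ 1 / 2 then 2 * x else 2 * (1 - x)

/-- The tent map maps `[0,1]` into itself. -/
theorem tent_mem {x : ℝ} (hx : x ∈ Set.Icc (0 : ℝ) 1) :
    tent x ∈ Set.Icc (0 : ℝ) 1 := by
  obtain ⟨h0, h1⟩ := hx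
  unfold tent
  split_ifs with h
  · exact ⟨by linarith, by linarith⟩
  · exact ⟨by linarith, by linarith⟩

/-- The tent map restricted to `[0,1]` (with the subspace topology and the
standard metric). -/
noncomputable def tentSub : Set.Icc (0 : ℝ) 1 → Set.Icc (0 : ℝ) 1 :=
  fun x => ⟨tent x, tent_mem x.2⟩

/-!
Every dyadic interval `[k/2ⁿ, (k+1)/2ⁿ] ⊆ [0,1]` is mapped by `Tⁿ` onto `[0,1]`, since `T` maps a
dyadic interval of level `n+1` onto one of level `n`. Every point of `[0,1]` has arbitrarily small
dyadic intervals containing it, so every neighbourhood is eventually blown up to all of `[0,1]`.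
This gives transitivity and sensitivity (some point near `x` is sent to whichever of `0`, `1`
is farther from `Tⁿ x`), and the intermediate value theorem gives a fixed point of `Tⁿ` in each
dyadic interval, hence density of the periodic points.
-/

open Set Filter Function

lemma continuous_tent : Continuous tent :=
  Continuous.if_le (by fun_prop) (by fun_prop) continuous_id continuous_const
    fun x hx => by rw [hx]; norm_num

lemma tent_one_sub (x : ℝ) : tent (1 - x) = tent x := by
  unfold tent
  split_ifs <;> linarith

lemma tent_image_Icc_of_le_half {a b : ℝ} (hb : b ≤ 1 / 2) :
    tent '' Icc a b = Icc (2 * a) (2 * b) := by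
  rw [← image_mul_left_Icc' two_pos]
  exact EqOn.image_eq fun x hx => if_pos (hx.2.trans hb)

lemma tent_image_Icc_of_half_le {a b : ℝ} (ha : 1 / 2 ≤ a) :
    tent '' Icc a b = Icc (2 - 2 * b) (2 - 2 * a) := by
  have hreflect : Icc a b = (1 - ·) '' Icc (1 - b) (1 - a) := by
    rw [image_const_sub_Icc, sub_sub_cancel, sub_sub_cancel]
  rw [hreflect, image_image]
  simp_rw [tent_one_sub]
  rw [tent_image_Icc_of_le_half (by linarith)]
  ring_nf

def dyadicIcc (n k : ℕ) : Set ℝ := Icc ((k : ℝ) / 2 ^ n) ((k + 1) / 2 ^ n)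

lemma dyadicIcc_subset_Icc {n k : ℕ} (hk : k < 2 ^ n) : dyadicIcc n k ⊆ Icc 0 1 := by
  have hk' : (k : ℝ) + 1 ≤ 2 ^ n := by exact_mod_cast hk
  exact Icc_subset_Icc (by positivity) ((div_le_one (by positivity)).2 hk')

lemma dist_le_of_mem_dyadicIcc {n k : ℕ} {x y : ℝ} (hx : x ∈ dyadicIcc n k)
    (hy : y ∈ dyadicIcc n k) : dist x y ≤ (1 / 2) ^ n :=
  (Real.dist_le_of_mem_Icc hx hy).trans_eq (by rw [div_pow, one_pow]; ring)

lemma exists_mem_dyadicIcc {x : ℝ} (hx : x ∈ Icc 0 1) (n : ℕ) :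
    ∃ k < 2 ^ n, x ∈ dyadicIcc n k := by
  have h2n : (0 : ℝ) < 2 ^ n := by positivity
  rcases hx.2.eq_or_lt with rfl | hx1
  · refine ⟨2 ^ n - 1, Nat.sub_lt (by positivity) one_pos, ?_⟩
    rw [dyadicIcc, Nat.cast_sub Nat.one_le_two_pow, Nat.cast_pow, Nat.cast_ofNat, Nat.cast_one,
      sub_add_cancel, div_self h2n.ne']
    exact ⟨(div_le_one h2n).2 (by linarith), le_rfl⟩
  · refine ⟨⌊x * 2 ^ n⌋₊, ?_, (div_le_iff₀ h2n).2 (Nat.floor_le (by nlinarith [hx.1])),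
      (le_div_iff₀ h2n).2 (Nat.lt_floor_add_one _).le⟩
    exact_mod_cast (Nat.floor_lt (by nlinarith [hx.1])).2 (by push_cast; nlinarith)

lemma tent_image_dyadicIcc_succ {n k : ℕ} (hk : k < 2 ^ (n + 1)) :
    ∃ j < 2 ^ n, tent '' dyadicIcc (n + 1) k = dyadicIcc n j := by
  have h2n : (0 : ℝ) < 2 ^ n := by positivity
  rw [pow_succ] at hk
  simp only [dyadicIcc, pow_succ]
  rcases lt_or_ge k (2 ^ n) with hlow | hhigh
  · have hk' : (k : ℝ) + 1 ≤ 2 ^ n := by exact_mod_cast hlow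
    refine ⟨k, hlow, ?_⟩
    rw [tent_image_Icc_of_le_half ((div_le_iff₀ (by positivity)).2 (by linarith))]
    congr 1 <;> field_simp
  · have hk' : (2 : ℝ) ^ n ≤ k := by exact_mod_cast hhigh
    obtain ⟨j, hj⟩ : ∃ j, j + k + 1 = 2 ^ n * 2 := ⟨2 ^ n * 2 - 1 - k, by omega⟩
    have hj' : (j : ℝ) + k + 1 = 2 ^ n * 2 := by exact_mod_cast hj
    refine ⟨j, by omega, ?_⟩
    rw [tent_image_Icc_of_half_le ((le_div_iff₀ (by positivity)).2 (by linarith))]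
    congr 1 <;> field_simp <;> linarith

lemma tent_iterate_image_dyadicIcc {n k : ℕ} (hk : k < 2 ^ n) :
    tent^[n] '' dyadicIcc n k = Icc 0 1 := by
  induction n generalizing k with
  | zero => simp [dyadicIcc, Nat.lt_one_iff.1 hk]
  | succ n ih =>
    obtain ⟨j, hj, himage⟩ := tent_image_dyadicIcc_succ hk
    rw [iterate_succ, image_comp, himage, ih hj]

lemma exists_dyadicIcc_subset_ball {x ε : ℝ} (hx : x ∈ Icc 0 1) (hε : 0 < ε) :
    ∃ n > 0, ∃ k < 2 ^ n, dyadicIcc n k ⊆ Metric.ball x ε := by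
  obtain ⟨n, hn, hnε⟩ := ((eventually_gt_atTop 0).and
    ((tendsto_pow_atTop_nhds_zero_of_lt_one (by norm_num) (by norm_num : (1 / 2 : ℝ) < 1)).eventually
      (gt_mem_nhds hε))).exists
  obtain ⟨k, hk, hxk⟩ := exists_mem_dyadicIcc hx n
  exact ⟨n, hn, k, hk, fun y hy => (dist_le_of_mem_dyadicIcc hy hxk).trans_lt hnε⟩

lemma coe_tentSub_iterate (n : ℕ) (x : Icc (0 : ℝ) 1) :
    ((tentSub^[n] x : Icc (0 : ℝ) 1) : ℝ) = tent^[n] x :=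
  (Semiconj.iterate_right (f := Subtype.val) (fun _ => rfl) n) x

lemma tentSub_surjective : Surjective tentSub := fun y =>
  ⟨⟨y / 2, by linarith [y.2.1], by linarith [y.2.2]⟩,
    Subtype.ext (by simp only [tentSub, tent, if_pos (by linarith [y.2.2] : (y : ℝ) / 2 ≤ 1 / 2)]; ring)⟩

lemma continuous_tentSub : Continuous tentSub :=
  (continuous_tent.comp continuous_subtype_val).subtype_mk _

lemma tentSub_iterate_surjOn_ball (x : Icc (0 : ℝ) 1) {ε : ℝ} (hε : 0 < ε) :
    ∃ n > 0, SurjOn tentSub^[n] (Metric.ball x ε) univ := by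
  obtain ⟨n, hn, k, hk, hball⟩ := exists_dyadicIcc_subset_ball x.2 hε
  refine ⟨n, hn, fun y _ => ?_⟩
  obtain ⟨z, hz, hzy⟩ : (y : ℝ) ∈ tent^[n] '' dyadicIcc n k :=
    (tent_iterate_image_dyadicIcc hk).symm ▸ y.2
  exact ⟨⟨z, dyadicIcc_subset_Icc hk hz⟩, hball hz,
    Subtype.ext ((coe_tentSub_iterate n _).trans hzy)⟩

lemma exists_periodic_tentSub_mem_ball (x : Icc (0 : ℝ) 1) {ε : ℝ} (hε : 0 < ε) :
    ∃ p ∈ Metric.ball x ε, ∃ n > 0, tentSub^[n] p = p := by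
  obtain ⟨n, hn, k, hk, hball⟩ := exists_dyadicIcc_subset_ball x.2 hε
  have hsurj : SurjOn tent^[n] (dyadicIcc n k) (dyadicIcc n k) := by
    rw [SurjOn, tent_iterate_image_dyadicIcc hk]
    exact dyadicIcc_subset_Icc hk
  obtain ⟨p, hp, hfix⟩ := exists_mem_Icc_isFixedPt_of_surjOn
    (continuous_tent.iterate n).continuousOn (by gcongr; linarith) hsurj
  exact ⟨⟨p, dyadicIcc_subset_Icc hk hp⟩, hball hp, n, hn,
    Subtype.ext ((coe_tentSub_iterate n _).trans hfix)⟩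

lemma exists_half_le_dist (y : Icc (0 : ℝ) 1) : ∃ e : Icc (0 : ℝ) 1, 1 / 2 ≤ dist y e := by
  rw [Subtype.exists]
  simp only [Subtype.dist_eq, Real.dist_eq]
  rcases le_or_gt (y : ℝ) (1 / 2) with hy | hy
  · exact ⟨1, right_mem_Icc.2 zero_le_one, le_abs.2 (Or.inr (by linarith))⟩
  · exact ⟨0, left_mem_Icc.2 zero_le_one, le_abs.2 (Or.inl (by linarith))⟩

/-- the tent map is chaotic on `[0,1]`: it maps `[0,1]` onto
`[0,1]`, is continuous on `[0,1]`, is topologically transitive on `[0,1]`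
(subspace topology), has a dense set of periodic points in `[0,1]`, and is
sensitive to initial conditions on `[0,1]` (standard metric). -/
theorem stmt15 :
    Function.Surjective tentSub ∧ Continuous tentSub ∧
    (∀ U V : Set (Set.Icc (0 : ℝ) 1), IsOpen U → IsOpen V →
      U.Nonempty → V.Nonempty → ∃ n > 0, (tentSub^[n] '' U ∩ V).Nonempty) ∧
    Dense {x : Set.Icc (0 : ℝ) 1 | ∃ n > 0, tentSub^[n] x = x} ∧
    ∃ η > 0, ∀ x : Set.Icc (0 : ℝ) 1, ∀ ε > 0, ∃ z : Set.Icc (0 : ℝ) 1,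
      dist x z < ε ∧ ∃ n : ℕ, dist (tentSub^[n] x) (tentSub^[n] z) > η := by
  refine ⟨tentSub_surjective, continuous_tentSub, ?_, ?_, ?_⟩
  · rintro U V hU - ⟨x, hxU⟩ ⟨v, hvV⟩
    obtain ⟨ε, hε, hball⟩ := Metric.isOpen_iff.1 hU x hxU
    obtain ⟨n, hn, hsurj⟩ := tentSub_iterate_surjOn_ball x hε
    exact ⟨n, hn, v, image_mono hball (hsurj (mem_univ v)), hvV⟩
  · exact Metric.dense_iff.2 fun x ε hε => exists_periodic_tentSub_mem_ball x hε
  · refine ⟨1 / 3, by norm_num, fun x ε hε => ?_⟩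
    obtain ⟨n, -, hsurj⟩ := tentSub_iterate_surjOn_ball x hε
    obtain ⟨e, he⟩ := exists_half_le_dist (tentSub^[n] x)
    obtain ⟨z, hz, hze⟩ := hsurj (mem_univ e)
    exact ⟨z, by rwa [dist_comm], n, by rw [hze]; linarith⟩
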